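/- arXiv:2206.14666 — 6 statements merged into one kernel-verified Lean document; each statement's English description precedes it below -/
import Mathlib

section
/- Let (Ω, 𝔉, P) be a probability space, let φ be a probability measure on [0,1), and let X, Y be essentially bounded real-valued random variables. Then the spectral risk measure is subadditive: ρ^φ(X + Y) ≤ ρ^φ(X) + ρ^φ(Y). -/
open MeasureTheory

/-- Value-at-risk at level `α` of the loss `X`: the `α`-quantile
`VaR_α(X) = inf {x : P(X ≤ x) ≥ α}`. -/
noncomputable def VaR {Ω : Type*} [MeasurableSpace Ω] (P : Measure Ω) (X : Ω → ℝ) (α : ℝ) : ℝ :=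
  sInf {x : ℝ | α ≤ (P {ω | X ω ≤ x}).toReal}

/-- Conditional value-at-risk: `CVaR_α(X) = (1-α)⁻¹ ∫_α^1 VaR_u(X) du`. -/
noncomputable def CVaR {Ω : Type*} [MeasurableSpace Ω] (P : Measure Ω) (X : Ω → ℝ) (α : ℝ) : ℝ :=
  (1 - α)⁻¹ * ∫ u in α..1, VaR P X u

/-- Spectral risk measure with spectrum `φ`: `ρ^φ(X) = ∫ CVaR_α(X) φ(dα)`. -/
noncomputable def spectralRisk {Ω : Type*} [MeasurableSpace Ω] (P : Measure Ω)
    (φ : Measure ℝ) (X : Ω → ℝ) : ℝ :=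
  ∫ α, CVaR P X α ∂φ

/-! For `0 < α < 1`, the Rockafellar–Uryasev formula
`∫_α^1 VaR_u(X) du = min_c ((1 - α) c + E (X - c)⁺)` holds, the minimum being attained at
`c = VaR_α(X)`: `u ↦ VaR_u(X)` is the quantile function of the law of `X`, which pushes Lebesgue
measure on `(0, 1)` forward to that law, and it is monotone. Since
`(x + y - a - b)⁺ ≤ (x - a)⁺ + (y - b)⁺`, the minimum for `X + Y` is at most the sum of the
minima for `X` and `Y`, so `CVaR_α` is subadditive; `CVaR_0` is the expectation, hence additive.
For essentially bounded `X`, `|CVaR_α(X)| ≤ ‖X‖_∞` on `[0, 1)`, so the inequality can be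
integrated against `φ`. -/

open ProbabilityTheory Set Filter Topology

noncomputable def quantile (ν : Measure ℝ) (u : ℝ) : ℝ :=
  sInf {x | u ≤ cdf ν x}

section Quantile

variable {ν : Measure ℝ} {u t : ℝ}

lemma bddBelow_setOf_le_cdf (hu : 0 < u) : BddBelow {x | u ≤ cdf ν x} := by
  obtain ⟨x₀, hx₀⟩ := ((tendsto_cdf_atBot ν).eventually (gt_mem_nhds hu)).exists
  exact ⟨x₀, fun x hx => ((monotone_cdf ν).reflect_lt (hx₀.trans_le hx)).le⟩

lemma nonempty_setOf_le_cdf (hu : u < 1) : {x | u ≤ cdf ν x}.Nonempty :=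
  ((tendsto_cdf_atTop ν).eventually (le_mem_nhds hu)).exists

lemma quantile_le_iff (hu : u ∈ Ioo 0 1) : quantile ν u ≤ t ↔ u ≤ cdf ν t := by
  refine ⟨fun h => ?_, fun h => csInf_le (bddBelow_setOf_le_cdf hu.1) h⟩
  have h_right : ∀ᶠ s in 𝓝[>] t, u ≤ cdf ν s := by
    filter_upwards [self_mem_nhdsWithin] with s hs
    obtain ⟨x, hx, hxs⟩ := (csInf_lt_iff (bddBelow_setOf_le_cdf hu.1)
      (nonempty_setOf_le_cdf hu.2)).1 (h.trans_lt hs)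
    exact hx.trans (monotone_cdf ν hxs.le)
  exact ge_of_tendsto ((cdf ν).right_continuous t |>.mono_left
    (nhdsWithin_mono t Ioi_subset_Ici_self)) h_right

lemma le_cdf_quantile (hu : u ∈ Ioo 0 1) : u ≤ cdf ν (quantile ν u) :=
  (quantile_le_iff hu).1 le_rfl

lemma monotoneOn_quantile : MonotoneOn (quantile ν) (Ioo 0 1) :=
  fun _ hu _ hv huv => (quantile_le_iff hu).2 (huv.trans (le_cdf_quantile hv))

lemma setIntegral_max_quantile_sub_quantile {α : ℝ} (hα : α ∈ Ioo 0 1) :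
    ∫ u in Ioo 0 1, max (quantile ν u - quantile ν α) 0
      = ∫ u in Ioo α 1, (quantile ν u - quantile ν α) := by
  rw [← inter_eq_right.2 (Ioo_subset_Ioo_left hα.1.le),
    ← setIntegral_indicator measurableSet_Ioo]
  refine setIntegral_congr_fun measurableSet_Ioo fun u hu => ?_
  by_cases h : u ∈ Ioo α 1
  · rw [indicator_of_mem h, max_eq_left (sub_nonneg.2 (monotoneOn_quantile hα hu h.1.le))]
  · rw [indicator_of_notMem h, max_eq_right (sub_nonpos.2 (monotoneOn_quantile hu hα
      (not_lt.1 fun h' => h ⟨h', hu.2⟩)))]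

lemma quantile_of_nonpos (hu : u ≤ 0) : quantile ν u = 0 := by
  have : {x | u ≤ cdf ν x} = univ := eq_univ_of_forall fun x => hu.trans (cdf_nonneg ν x)
  rw [quantile, this, Real.sInf_of_not_bddBelow not_bddBelow_univ]

lemma quantile_of_one_lt (hu : 1 < u) : quantile ν u = 0 := by
  have : {x | u ≤ cdf ν x} = ∅ :=
    eq_empty_of_forall_notMem fun x hx => ((cdf_le_one ν x).trans_lt hu).not_ge hx
  rw [quantile, this, Real.sInf_empty]

lemma quantile_eq_indicator_ae :
    quantile ν =ᵐ[volume] (Ioo 0 1).indicator (quantile ν) := by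
  filter_upwards [compl_mem_ae_iff.2 (measure_singleton (μ := volume) (1 : ℝ))] with u hu
  by_cases hu' : u ∈ Ioo 0 1
  · rw [indicator_of_mem hu']
  · rw [indicator_of_notMem hu']
    rcases le_or_gt u 0 with h | h
    · exact quantile_of_nonpos h
    · exact quantile_of_one_lt <| lt_of_le_of_ne (not_lt.1 fun h1 => hu' ⟨h, h1⟩) (Ne.symm hu)

lemma aemeasurable_quantile : AEMeasurable (quantile ν) (volume.restrict (Ioo 0 1)) :=
  aemeasurable_restrict_of_monotoneOn measurableSet_Ioo monotoneOn_quantile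

variable [IsProbabilityMeasure ν]

lemma map_quantile : (volume.restrict (Ioo 0 1)).map (quantile ν) = ν := by
  refine Measure.ext_of_Iic _ _ fun t => ?_
  have h_preimage : quantile ν ⁻¹' Iic t ∩ Ioo 0 1 = Ioo 0 1 ∩ Iic (cdf ν t) := by
    ext u
    simp only [mem_inter_iff, mem_preimage, mem_Iic]
    exact ⟨fun ⟨h, hu⟩ => ⟨hu, (quantile_le_iff hu).1 h⟩,
      fun ⟨hu, h⟩ => ⟨(quantile_le_iff hu).2 h, hu⟩⟩
  rw [Measure.map_apply_of_aemeasurable aemeasurable_quantile measurableSet_Iic,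
    Measure.restrict_apply' measurableSet_Ioo, h_preimage,
    measure_congr (Ioo_ae_eq_Ioc.inter (ae_eq_refl (Iic (cdf ν t)))), Ioc_inter_Iic,
    min_eq_right (cdf_le_one ν t), Real.volume_Ioc, sub_zero, ofReal_cdf]

lemma integral_comp_quantile {E : Type*} [NormedAddCommGroup E] [NormedSpace ℝ E] {f : ℝ → E}
    (hf : AEStronglyMeasurable f ν) :
    ∫ u in Ioo 0 1, f (quantile ν u) = ∫ x, f x ∂ν := by
  rw [← map_quantile (ν := ν)] at hf
  rw [← integral_map aemeasurable_quantile hf, map_quantile]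

lemma integrableOn_comp_quantile_iff {E : Type*} [NormedAddCommGroup E] {f : ℝ → E}
    (hf : AEStronglyMeasurable f ν) :
    IntegrableOn (fun u => f (quantile ν u)) (Ioo 0 1) ↔ Integrable f ν := by
  rw [← map_quantile (ν := ν)] at hf
  rw [IntegrableOn, ← Function.comp_def, ← integrable_map_measure hf aemeasurable_quantile,
    map_quantile]

lemma quantile_mem_Icc {a b : ℝ} (h : ∀ᵐ x ∂ν, x ∈ Icc a b) (hu : u ∈ Ioo 0 1) :
    quantile ν u ∈ Icc a b := by
  refine ⟨le_of_not_gt fun h_lt => ?_, (quantile_le_iff hu).2 ?_⟩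
  · have h_null : ν (Iic (quantile ν u)) = 0 :=
      measure_eq_zero_iff_ae_notMem.2 <| h.mono fun x hx hx' => (h_lt.trans_le hx.1).not_ge hx'
    have := le_cdf_quantile (ν := ν) hu
    rw [cdf_eq_real, measureReal_def, h_null, ENNReal.toReal_zero] at this
    exact hu.1.not_ge this
  · rw [cdf_eq_real, measureReal_def,
      (mem_ae_iff_prob_eq_one measurableSet_Iic).1 (h.mono fun x hx => hx.2)]
    exact hu.2.le

lemma integrableOn_quantile (hν : Integrable id ν) : IntegrableOn (quantile ν) (Ioo 0 1) :=
  (integrableOn_comp_quantile_iff aestronglyMeasurable_id).2 hν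

lemma integrable_quantile (hν : Integrable id ν) : Integrable (quantile ν) :=
  ((integrable_indicator_iff measurableSet_Ioo).2 (integrableOn_quantile hν)).congr
    quantile_eq_indicator_ae.symm

theorem isLeast_setIntegral_quantile (hν : Integrable id ν) {α : ℝ} (hα : α ∈ Ioo 0 1) :
    IsLeast (range fun c => (1 - α) * c + ∫ x, max (x - c) 0 ∂ν)
      (∫ u in Ioo α 1, quantile ν u) := by
  have h_sub : Ioo α 1 ⊆ Ioo 0 1 := Ioo_subset_Ioo_left hα.1.le
  have h_vol : volume.real (Ioo α 1) = 1 - α := Real.volume_real_Ioo_of_le hα.2.le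
  have hq := integrableOn_quantile hν
  have h_const (c : ℝ) : IntegrableOn (fun _ => c) (Ioo α 1) :=
    integrableOn_const measure_Ioo_lt_top.ne
  have h_pos (c : ℝ) : IntegrableOn (fun u => max (quantile ν u - c) 0) (Ioo 0 1) :=
    (hq.sub (integrableOn_const measure_Ioo_lt_top.ne (C := c))).pos_part
  have h_transfer (c : ℝ) :
      ∫ u in Ioo 0 1, max (quantile ν u - c) 0 = ∫ x, max (x - c) 0 ∂ν :=
    integral_comp_quantile (f := fun x => max (x - c) 0) (by fun_prop)
  refine ⟨⟨quantile ν α, ?_⟩, ?_⟩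
  · dsimp only
    rw [← h_transfer, setIntegral_max_quantile_sub_quantile hα, integral_sub (hq.mono_set h_sub) (h_const _),
      setIntegral_const, h_vol, smul_eq_mul]
    ring
  · rintro _ ⟨c, rfl⟩
    calc ∫ u in Ioo α 1, quantile ν u
        ≤ ∫ u in Ioo α 1, (c + max (quantile ν u - c) 0) :=
          setIntegral_mono (hq.mono_set h_sub) ((h_const c).add ((h_pos c).mono_set h_sub))
            fun u => by linarith [le_max_left (quantile ν u - c) 0]
      _ = (1 - α) * c + ∫ u in Ioo α 1, max (quantile ν u - c) 0 := by
          rw [integral_add (h_const c) ((h_pos c).mono_set h_sub), setIntegral_const, h_vol,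
            smul_eq_mul]
      _ ≤ (1 - α) * c + ∫ u in Ioo 0 1, max (quantile ν u - c) 0 := by
          grw [setIntegral_mono_set (h_pos c) (ae_of_all _ fun u => le_max_right _ _)
            h_sub.eventuallyLE]
      _ = (1 - α) * c + ∫ x, max (x - c) 0 ∂ν := by rw [h_transfer]

end Quantile

section VaR

variable {Ω : Type*} [MeasurableSpace Ω] {P : Measure Ω} {X Y : Ω → ℝ} {α M : ℝ}

lemma integrable_id_map (hX : Integrable X P) : Integrable id (P.map X) :=
  (integrable_map_measure aestronglyMeasurable_id hX.aemeasurable).2 hX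

variable [IsProbabilityMeasure P]

lemma VaR_eq_quantile (hX : AEMeasurable X P) : VaR P X = quantile (P.map X) := by
  have := Measure.isProbabilityMeasure_map hX
  ext u
  simp only [VaR, quantile, cdf_eq_real, measureReal_def,
    Measure.map_apply_of_aemeasurable hX measurableSet_Iic]
  rfl

lemma intervalIntegral_VaR (hX : AEMeasurable X P) (hα : α ≤ 1) :
    ∫ u in α..1, VaR P X u = ∫ u in Ioo α 1, quantile (P.map X) u := by
  rw [VaR_eq_quantile hX, intervalIntegral.integral_of_le hα,
    Measure.restrict_congr_set Ioo_ae_eq_Ioc]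

lemma integrable_VaR (hX : Integrable X P) : Integrable (VaR P X) := by
  have := Measure.isProbabilityMeasure_map hX.aemeasurable
  rw [VaR_eq_quantile hX.aemeasurable]
  exact integrable_quantile (integrable_id_map hX)

lemma intervalIntegral_zero_one_VaR (hX : Integrable X P) : ∫ u in 0..1, VaR P X u = P[X] := by
  have := Measure.isProbabilityMeasure_map hX.aemeasurable
  rw [intervalIntegral_VaR hX.aemeasurable zero_le_one]
  exact (integral_comp_quantile (f := id) aestronglyMeasurable_id).trans
    (integral_map hX.aemeasurable aestronglyMeasurable_id)

theorem isLeast_intervalIntegral_VaR (hX : Integrable X P) (hα : α ∈ Ioo 0 1) :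
    IsLeast (range fun c => (1 - α) * c + ∫ ω, max (X ω - c) 0 ∂P)
      (∫ u in α..1, VaR P X u) := by
  have := Measure.isProbabilityMeasure_map hX.aemeasurable
  have h_transfer (c : ℝ) : ∫ x, max (x - c) 0 ∂(P.map X) = ∫ ω, max (X ω - c) 0 ∂P :=
    integral_map hX.aemeasurable (f := fun x => max (x - c) 0) (by fun_prop)
  rw [intervalIntegral_VaR hX.aemeasurable hα.2.le]
  simpa only [h_transfer] using isLeast_setIntegral_quantile (integrable_id_map hX) hα

lemma intervalIntegral_VaR_add_le (hX : Integrable X P) (hY : Integrable Y P) (hα : α ∈ Ico 0 1) :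
    ∫ u in α..1, VaR P (fun ω => X ω + Y ω) u
      ≤ (∫ u in α..1, VaR P X u) + ∫ u in α..1, VaR P Y u := by
  have hXY : Integrable (fun ω => X ω + Y ω) P := hX.add hY
  rcases hα.1.eq_or_lt with rfl | hα₀
  · rw [intervalIntegral_zero_one_VaR hX, intervalIntegral_zero_one_VaR hY,
      intervalIntegral_zero_one_VaR hXY, integral_add hX hY]
  have h_pos {Z : Ω → ℝ} (hZ : Integrable Z P) (c : ℝ) :
      Integrable (fun ω => max (Z ω - c) 0) P :=
    (hZ.sub (integrable_const c)).pos_part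
  obtain ⟨⟨a, ha⟩, -⟩ := isLeast_intervalIntegral_VaR hX ⟨hα₀, hα.2⟩
  obtain ⟨⟨b, hb⟩, -⟩ := isLeast_intervalIntegral_VaR hY ⟨hα₀, hα.2⟩
  have h_sum : Integrable (fun ω => max (X ω - a) 0 + max (Y ω - b) 0) P :=
    (h_pos hX a).add (h_pos hY b)
  calc ∫ u in α..1, VaR P (fun ω => X ω + Y ω) u
      ≤ (1 - α) * (a + b) + ∫ ω, max (X ω + Y ω - (a + b)) 0 ∂P :=
        (isLeast_intervalIntegral_VaR hXY ⟨hα₀, hα.2⟩).2 ⟨a + b, rfl⟩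
    _ ≤ (1 - α) * (a + b) + ∫ ω, (max (X ω - a) 0 + max (Y ω - b) 0) ∂P := by
        refine add_le_add le_rfl (integral_mono (h_pos hXY _) h_sum fun ω => ?_)
        exact max_le (by linarith [le_max_left (X ω - a) 0, le_max_left (Y ω - b) 0])
          (by positivity)
    _ = (∫ u in α..1, VaR P X u) + ∫ u in α..1, VaR P Y u := by
        rw [integral_add (h_pos hX a) (h_pos hY b), ← ha, ← hb]
        ring

lemma CVaR_add_le (hX : Integrable X P) (hY : Integrable Y P) (hα : α ∈ Ico 0 1) :
    CVaR P (fun ω => X ω + Y ω) α ≤ CVaR P X α + CVaR P Y α := by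
  simp only [CVaR, ← mul_add]
  exact mul_le_mul_of_nonneg_left (intervalIntegral_VaR_add_le hX hY hα)
    (inv_nonneg.2 (sub_nonneg.2 hα.2.le))

lemma abs_CVaR_le (hX : AEMeasurable X P) (hM : ∀ᵐ ω ∂P, |X ω| ≤ M) (hα : α ∈ Ico 0 1) :
    |CVaR P X α| ≤ M := by
  have := Measure.isProbabilityMeasure_map hX
  have h_law : ∀ᵐ x ∂P.map X, x ∈ Icc (-M) M :=
    (ae_map_iff hX measurableSet_Icc).2 (hM.mono fun _ h => abs_le.1 h)
  have h_pos : 0 < 1 - α := sub_pos.2 hα.2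
  have h_int : |∫ u in Ioo α 1, quantile (P.map X) u| ≤ M * (1 - α) := by
    have h_bound : ∀ u ∈ Ioo α 1, ‖quantile (P.map X) u‖ ≤ M := fun u hu =>
      abs_le.2 (quantile_mem_Icc h_law ⟨hα.1.trans_lt hu.1, hu.2⟩)
    have := norm_setIntegral_le_of_norm_le_const (measure_Ioo_lt_top (μ := volume)) h_bound
    rwa [Real.norm_eq_abs, Real.volume_real_Ioo_of_le hα.2.le] at this
  rw [CVaR, intervalIntegral_VaR hX hα.2.le, abs_mul, abs_inv, abs_of_pos h_pos]
  calc (1 - α)⁻¹ * |∫ u in Ioo α 1, quantile (P.map X) u| ≤ (1 - α)⁻¹ * (M * (1 - α)) := by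
        gcongr
    _ = M := by field_simp

lemma measurable_CVaR (hX : Integrable X P) : Measurable (CVaR P X) := by
  have h_cont : Continuous fun α => ∫ u in α..1, VaR P X u :=
    ((integrable_VaR hX).continuous_primitive 1).neg.congr fun α =>
      (intervalIntegral.integral_symm 1 α).symm
  exact ((measurable_const.sub measurable_id).inv).mul h_cont.measurable

lemma integrable_CVaR {φ : Measure ℝ} [IsFiniteMeasure φ] (hφ : ∀ᵐ α ∂φ, α ∈ Ico 0 1)
    (hX : Integrable X P) (hM : ∀ᵐ ω ∂P, |X ω| ≤ M) : Integrable (CVaR P X) φ :=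
  Integrable.mono' (integrable_const M) (measurable_CVaR hX).aestronglyMeasurable
    (hφ.mono fun _ hα => abs_CVaR_le hX.aemeasurable hM hα)

end VaR

/-- The spectral risk measure is subadditive: `ρ^φ(X+Y) ≤ ρ^φ(X) + ρ^φ(Y)`. -/
theorem spectralRisk_subadditive {Ω : Type*} [MeasurableSpace Ω] (P : Measure Ω)
    [IsProbabilityMeasure P] (φ : Measure ℝ) [IsProbabilityMeasure φ]
    (hφ : φ (Set.Ico (0:ℝ) 1)ᶜ = 0)
    (X Y : Ω → ℝ) (hX : MemLp X ⊤ P) (hY : MemLp Y ⊤ P) :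
    spectralRisk P φ (fun ω => X ω + Y ω) ≤ spectralRisk P φ X + spectralRisk P φ Y := by
  have hφ' : ∀ᵐ α ∂φ, α ∈ Ico 0 1 := mem_ae_iff.2 hφ
  have hXi : Integrable X P := hX.integrable le_top
  have hYi : Integrable Y P := hY.integrable le_top
  have hXb : ∀ᵐ ω ∂P, |X ω| ≤ lpNorm X ⊤ P := ae_le_lpNorm_exponent_top hX
  have hYb : ∀ᵐ ω ∂P, |Y ω| ≤ lpNorm Y ⊤ P := ae_le_lpNorm_exponent_top hY
  have hXYb : ∀ᵐ ω ∂P, |X ω + Y ω| ≤ lpNorm X ⊤ P + lpNorm Y ⊤ P := by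
    filter_upwards [hXb, hYb] with ω h₁ h₂ using (abs_add_le _ _).trans (add_le_add h₁ h₂)
  have hXφ := integrable_CVaR hφ' hXi hXb
  have hYφ := integrable_CVaR hφ' hYi hYb
  rw [spectralRisk, spectralRisk, spectralRisk, ← integral_add hXφ hYφ]
  exact integral_mono_ae (integrable_CVaR hφ' (hXi.add hYi) hXYb) (hXφ.add hYφ)
    (hφ'.mono fun α hα => CVaR_add_le hXi hYi hα)
end

section
/- Let {ρ_{t,T}}_{t=0,…,T} be a dynamic risk measure satisfying ρ_{t,T}(X_t, X_{t+1}, …, X_T) = X_t + ρ_{t,T}(0, X_{t+1}, …, X_T) almost surely for all (X_t,…,X_T), and ρ_{t,T}(0,…,0) = 0, for every t. Then {ρ_{t,T}}_{t=0,…,T} is time-consistent if and only if for all 0 ≤ t₁ ≤ t₂ ≤ T and all (X_0,…,X_T) with each X_τ bounded and 𝔉_τ-measurable, one has ρ_{t₁,T}(X_{t₁}, …, X_T) = ρ_{t₁,t₂}(X_{t₁}, …, X_{t₂−1}, ρ_{t₂,T}(X_{t₂}, …, X_T)) almost surely. -/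
open MeasureTheory

/-- `X` belongs to `L_t`: it is `𝔉 t`-measurable and essentially bounded. -/
def InLinf {Ω : Type*} [MeasurableSpace Ω] (𝔉 : ℕ → MeasurableSpace Ω) (P : Measure Ω)
    (t : ℕ) (X : Ω → ℝ) : Prop :=
  Measurable[𝔉 t] X ∧ ∃ C : ℝ, ∀ᵐ ω ∂P, |X ω| ≤ C

/-- A sequence of costs such that each component `X τ`, `τ ≤ T`, lies in `L_τ`. -/
def AdaptedBdd {Ω : Type*} [MeasurableSpace Ω] (𝔉 : ℕ → MeasurableSpace Ω) (P : Measure Ω)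
    (T : ℕ) (X : ℕ → Ω → ℝ) : Prop :=
  ∀ τ, τ ≤ T → InLinf 𝔉 P τ (X τ)

/-- Time-consistency of a dynamic risk measure `ρ`, where `ρ t X` stands for
`ρ_{t,T}(X_t, …, X_T)` (components of `X` outside `{t, …, T}` being irrelevant). -/
def TimeConsistent {Ω : Type*} [MeasurableSpace Ω] (𝔉 : ℕ → MeasurableSpace Ω) (P : Measure Ω)
    (T : ℕ) (ρ : ℕ → (ℕ → Ω → ℝ) → Ω → ℝ) : Prop :=
  ∀ t₁ t₂ : ℕ, t₁ < t₂ → t₂ ≤ T → ∀ X Z : ℕ → Ω → ℝ,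
    AdaptedBdd 𝔉 P T X → AdaptedBdd 𝔉 P T Z →
    (∀ τ, t₁ ≤ τ → τ < t₂ → X τ =ᵐ[P] Z τ) →
    (∀ᵐ ω ∂P, ρ t₂ X ω ≤ ρ t₂ Z ω) →
    ∀ᵐ ω ∂P, ρ t₁ X ω ≤ ρ t₁ Z ω

section Aux

variable {Ω : Type*} [MeasurableSpace Ω] {𝔉 : ℕ → MeasurableSpace Ω} {P : Measure Ω}

lemma inLinf_zero (t : ℕ) : InLinf 𝔉 P t (fun _ => (0:ℝ)) :=
  ⟨@measurable_const _ _ _ (𝔉 t) _, 0, Filter.Eventually.of_forall fun _ => by simp⟩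

lemma adaptedBdd_cut {T : ℕ} {X : ℕ → Ω → ℝ} (hX : AdaptedBdd 𝔉 P T X)
    {t₂ : ℕ} {R : Ω → ℝ} (hR : InLinf 𝔉 P t₂ R) :
    AdaptedBdd 𝔉 P T (fun τ => if τ < t₂ then X τ else if τ = t₂ then R else fun _ => (0:ℝ)) := by
  intro τ hτ
  by_cases h1 : τ < t₂
  · simpa [h1] using hX τ hτ
  · by_cases h2 : τ = t₂
    · subst h2; simpa [h1] using hR
    · simpa [h1, h2] using inLinf_zero (𝔉 := 𝔉) (P := P) τ

lemma adaptedBdd_update {T : ℕ} {X : ℕ → Ω → ℝ} (hX : AdaptedBdd 𝔉 P T X) (t : ℕ) :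
    AdaptedBdd 𝔉 P T (Function.update X t (fun _ => (0:ℝ))) := by
  intro τ hτ
  by_cases h : τ = t
  · subst h; simpa [Function.update_self] using inLinf_zero (𝔉 := 𝔉) (P := P) τ
  · simpa [Function.update_of_ne h] using hX τ hτ

end Aux

/-- Ruszczyński–Shapiro characterisation: a normalized dynamic risk measure satisfying the
translation property is time-consistent iff it satisfies the recursive relationship
`ρ_{t₁,T}(X_{t₁},…,X_T) = ρ_{t₁,t₂}(X_{t₁},…,X_{t₂−1}, ρ_{t₂,T}(X_{t₂},…,X_T))`,
where `ρ_{t₁,t₂}(Y_{t₁},…,Y_{t₂}) := ρ_{t₁,T}(Y_{t₁},…,Y_{t₂},0,…,0)`. -/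
theorem timeConsistent_iff_recursive {Ω : Type*} [MeasurableSpace Ω]
    (P : Measure Ω) [IsProbabilityMeasure P]
    (𝔉 : ℕ → MeasurableSpace Ω) (h𝔉mono : Monotone 𝔉)
    (h𝔉le : ∀ t, 𝔉 t ≤ ‹MeasurableSpace Ω›)
    (T : ℕ) (ρ : ℕ → (ℕ → Ω → ℝ) → Ω → ℝ)
    -- ρ_{t,T} maps into L_t
    (hmem : ∀ t, t ≤ T → ∀ X, AdaptedBdd 𝔉 P T X → InLinf 𝔉 P t (ρ t X))
    -- ρ_{t,T} depends only on the components t,…,T, up to a.s. equality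
    (hdep : ∀ t, t ≤ T → ∀ X Z, AdaptedBdd 𝔉 P T X → AdaptedBdd 𝔉 P T Z →
      (∀ τ, t ≤ τ → τ ≤ T → X τ =ᵐ[P] Z τ) → ρ t X =ᵐ[P] ρ t Z)
    -- monotonicity
    (hmono : ∀ t, t ≤ T → ∀ X Z, AdaptedBdd 𝔉 P T X → AdaptedBdd 𝔉 P T Z →
      (∀ τ, t ≤ τ → τ ≤ T → ∀ᵐ ω ∂P, X τ ω ≤ Z τ ω) →
      ∀ᵐ ω ∂P, ρ t X ω ≤ ρ t Z ω)
    -- translation property: ρ_{t,T}(X_t, X_{t+1}, …, X_T) = X_t + ρ_{t,T}(0, X_{t+1}, …, X_T)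
    (htrans : ∀ t, t ≤ T → ∀ X, AdaptedBdd 𝔉 P T X →
      ρ t X =ᵐ[P] fun ω => X t ω + ρ t (Function.update X t (fun _ => (0:ℝ))) ω)
    -- normalization: ρ_{t,T}(0,…,0) = 0
    (hzero : ∀ t, t ≤ T → ρ t (fun _ _ => (0:ℝ)) =ᵐ[P] fun _ => (0:ℝ)) :
    TimeConsistent 𝔉 P T ρ ↔
      ∀ t₁ t₂ : ℕ, t₁ ≤ t₂ → t₂ ≤ T → ∀ X : ℕ → Ω → ℝ, AdaptedBdd 𝔉 P T X →
        ρ t₁ X =ᵐ[P]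
          ρ t₁ (fun τ => if τ < t₂ then X τ else if τ = t₂ then ρ t₂ X
            else fun _ => (0:ℝ)) := by
  have key : ∀ t₂, t₂ ≤ T → ∀ X, AdaptedBdd 𝔉 P T X →
      ρ t₂ (fun τ => if τ < t₂ then X τ else if τ = t₂ then ρ t₂ X
        else fun _ => (0:ℝ)) =ᵐ[P] ρ t₂ X := by
    intro t₂ ht₂ X hX
    set Z : ℕ → Ω → ℝ := fun τ => if τ < t₂ then X τ else if τ = t₂ then ρ t₂ X
      else fun _ => (0:ℝ) with hZdef
    have hZad : AdaptedBdd 𝔉 P T Z := adaptedBdd_cut hX (hmem t₂ ht₂ X hX)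
    have h1 := htrans t₂ ht₂ Z hZad
    have h2 : ρ t₂ (Function.update Z t₂ (fun _ => (0:ℝ))) =ᵐ[P] (fun _ => (0:ℝ)) := by
      refine (hdep t₂ ht₂ _ _ (adaptedBdd_update hZad t₂)
        (fun τ _ => inLinf_zero τ) ?_).trans (hzero t₂ ht₂)
      intro τ hτ hτT
      by_cases h : τ = t₂
      · subst h; simp [Function.update_self]
      · have hlt : ¬ τ < t₂ := by omega
        simp only [Function.update_of_ne h, hZdef, if_neg hlt, if_neg h]
        exact Filter.EventuallyEq.rfl
    filter_upwards [h1, h2] with ω hω h0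
    have hZt : Z t₂ = ρ t₂ X := by simp [hZdef]
    rw [hω, h0, hZt]
    simp
  constructor
  · intro hTC t₁ t₂ h12 ht₂ X hX
    rcases eq_or_lt_of_le h12 with rfl | hlt
    · exact (key t₁ ht₂ X hX).symm
    · set Z : ℕ → Ω → ℝ := fun τ => if τ < t₂ then X τ else if τ = t₂ then ρ t₂ X
        else fun _ => (0:ℝ) with hZdef
      have hZad : AdaptedBdd 𝔉 P T Z := adaptedBdd_cut hX (hmem t₂ ht₂ X hX)
      have hk := key t₂ ht₂ X hX
      have hagree : ∀ τ, t₁ ≤ τ → τ < t₂ → X τ =ᵐ[P] Z τ := by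
        intro τ _ hτ
        simp [hZdef, hτ]
      have le1 : ∀ᵐ ω ∂P, ρ t₁ X ω ≤ ρ t₁ Z ω :=
        hTC t₁ t₂ hlt ht₂ X Z hX hZad hagree hk.symm.le
      have le2 : ∀ᵐ ω ∂P, ρ t₁ Z ω ≤ ρ t₁ X ω :=
        hTC t₁ t₂ hlt ht₂ Z X hZad hX (fun τ h1 h2 => (hagree τ h1 h2).symm) hk.le
      filter_upwards [le1, le2] with ω hω1 hω2
      exact le_antisymm hω1 hω2
  · intro hrec t₁ t₂ hlt ht₂ X Z hX hZ hagree hle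
    have h12 : t₁ ≤ t₂ := le_of_lt hlt
    have ht₁ : t₁ ≤ T := le_trans h12 ht₂
    have hXc := hrec t₁ t₂ h12 ht₂ X hX
    have hZc := hrec t₁ t₂ h12 ht₂ Z hZ
    have hX'ad : AdaptedBdd 𝔉 P T (fun τ => if τ < t₂ then X τ else if τ = t₂ then ρ t₂ X
        else fun _ => (0:ℝ)) := adaptedBdd_cut hX (hmem t₂ ht₂ X hX)
    have hZ'ad : AdaptedBdd 𝔉 P T (fun τ => if τ < t₂ then Z τ else if τ = t₂ then ρ t₂ Z
        else fun _ => (0:ℝ)) := adaptedBdd_cut hZ (hmem t₂ ht₂ Z hZ)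
    have hm := hmono t₁ ht₁ _ _ hX'ad hZ'ad ?_
    · filter_upwards [hXc, hZc, hm] with ω h1 h2 h3
      rw [h1, h2]
      exact h3
    · intro τ hτ₁ hτT
      by_cases h1 : τ < t₂
      · filter_upwards [hagree τ hτ₁ h1] with ω hω
        simp [h1, hω]
      · by_cases h2 : τ = t₂
        · subst h2
          filter_upwards [hle] with ω hω
          simpa [h1] using hω
        · filter_upwards with ω
          simp [h1, h2]
end

section
/- Let {ρ_{t,T}}_{t=0,…,T} be a time-consistent dynamic risk measure satisfying ρ_{t,T}(X_t, X_{t+1}, …, X_T) = X_t + ρ_{t,T}(0, X_{t+1}, …, X_T) almost surely and ρ_{t,T}(0,…,0) = 0 for every t. Define the one-step conditional risk measures ρ_t(X) := ρ_{t,t+1}(0, X). Then for every t = 0,…,T and all (X_t,…,X_T) with each X_τ bounded and 𝔉_τ-measurable, the recursive relationship holds almost surely: ρ_{t,T}(X_t, …, X_T) = X_t + ρ_t( X_{t+1} + ρ_{t+1}( X_{t+2} + ⋯ + ρ_{T−2}( X_{T−1} + ρ_{T−1}(X_T) ) ⋯ ) ). -/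
open MeasureTheory

/-- The one-step conditional risk measure `ρ_t(X) := ρ_{t,t+1}(0, X)`, i.e. `ρ_{t,T}` applied
to the sequence whose `(t+1)`-st component is `X` and all other components vanish. -/
def oneStep {Ω : Type*} (ρ : ℕ → (ℕ → Ω → ℝ) → Ω → ℝ) (t : ℕ) (X : Ω → ℝ) : Ω → ℝ :=
  ρ t (fun τ => if τ = t + 1 then X else fun _ => (0:ℝ))

/-- The nested expression
`X_t + ρ_t( X_{t+1} + ρ_{t+1}( X_{t+2} + ⋯ + ρ_{T−2}( X_{T−1} + ρ_{T−1}(X_T) ) ⋯ ) )`. -/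
def nest {Ω : Type*} (ρ : ℕ → (ℕ → Ω → ℝ) → Ω → ℝ) (T : ℕ) (X : ℕ → Ω → ℝ) (t : ℕ) :
    Ω → ℝ :=
  if h : t < T then
    fun ω => X t ω + oneStep ρ t (nest ρ T X (t + 1)) ω
  else X t
termination_by T - t
decreasing_by omega

/-- Recursive relationship for time-consistent dynamic risk measures in terms of the
one-step conditional risk measures. -/
theorem timeConsistent_recursion {Ω : Type*} [MeasurableSpace Ω]
    (P : Measure Ω) [IsProbabilityMeasure P]
    (𝔉 : ℕ → MeasurableSpace Ω) (h𝔉mono : Monotone 𝔉)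
    (h𝔉le : ∀ t, 𝔉 t ≤ ‹MeasurableSpace Ω›)
    (T : ℕ) (ρ : ℕ → (ℕ → Ω → ℝ) → Ω → ℝ)
    -- ρ_{t,T} maps into L_t
    (hmem : ∀ t, t ≤ T → ∀ X, AdaptedBdd 𝔉 P T X → InLinf 𝔉 P t (ρ t X))
    -- ρ_{t,T} depends only on the components t,…,T, up to a.s. equality
    (hdep : ∀ t, t ≤ T → ∀ X Z, AdaptedBdd 𝔉 P T X → AdaptedBdd 𝔉 P T Z →
      (∀ τ, t ≤ τ → τ ≤ T → X τ =ᵐ[P] Z τ) → ρ t X =ᵐ[P] ρ t Z)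
    -- monotonicity
    (hmono : ∀ t, t ≤ T → ∀ X Z, AdaptedBdd 𝔉 P T X → AdaptedBdd 𝔉 P T Z →
      (∀ τ, t ≤ τ → τ ≤ T → ∀ᵐ ω ∂P, X τ ω ≤ Z τ ω) →
      ∀ᵐ ω ∂P, ρ t X ω ≤ ρ t Z ω)
    -- translation property: ρ_{t,T}(X_t, X_{t+1}, …, X_T) = X_t + ρ_{t,T}(0, X_{t+1}, …, X_T)
    (htrans : ∀ t, t ≤ T → ∀ X, AdaptedBdd 𝔉 P T X →
      ρ t X =ᵐ[P] fun ω => X t ω + ρ t (Function.update X t (fun _ => (0:ℝ))) ω)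
    -- normalization: ρ_{t,T}(0,…,0) = 0
    (hzero : ∀ t, t ≤ T → ρ t (fun _ _ => (0:ℝ)) =ᵐ[P] fun _ => (0:ℝ))
    -- time-consistency
    (htc : TimeConsistent 𝔉 P T ρ) :
    ∀ t, t ≤ T → ∀ X : ℕ → Ω → ℝ, AdaptedBdd 𝔉 P T X →
      ρ t X =ᵐ[P] nest ρ T X t := by

  classical
  -- zero sequence is adapted
  have hzeroAd : AdaptedBdd 𝔉 P T (fun _ _ => (0:ℝ)) := by
    intro τ _
    exact ⟨measurable_const, 0, Filter.Eventually.of_forall fun ω => by simp⟩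
  -- updating a component by zero preserves adaptedness
  have hupdAd : ∀ (t : ℕ) (X : ℕ → Ω → ℝ), AdaptedBdd 𝔉 P T X →
      AdaptedBdd 𝔉 P T (Function.update X t (fun _ => (0:ℝ))) := by
    intro t X hX τ hτ
    rcases eq_or_ne τ t with rfl | h
    · rw [Function.update_self]
      exact ⟨measurable_const, 0, Filter.Eventually.of_forall fun ω => by simp⟩
    · rw [Function.update_of_ne h]
      exact hX τ hτ
  -- the single-component sequence used in `oneStep` is adapted
  have hWAd : ∀ (t : ℕ) (Y : Ω → ℝ), InLinf 𝔉 P (t+1) Y →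
      AdaptedBdd 𝔉 P T (fun τ => if τ = t + 1 then Y else fun _ => (0:ℝ)) := by
    intro t Y hY τ hτ
    by_cases h : τ = t + 1
    · subst h; simpa using hY
    · simp only [if_neg h]
      exact ⟨measurable_const, 0, Filter.Eventually.of_forall fun ω => by simp⟩
  -- sum of two elements of L_t is in L_t
  have haddL : ∀ (t : ℕ) (f g : Ω → ℝ), InLinf 𝔉 P t f → InLinf 𝔉 P t g →
      InLinf 𝔉 P t (fun ω => f ω + g ω) := by
    intro t f g ⟨hfm, Cf, hfb⟩ ⟨hgm, Cg, hgb⟩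
    refine ⟨hfm.add hgm, Cf + Cg, ?_⟩
    filter_upwards [hfb, hgb] with ω h1 h2
    exact (abs_add_le _ _).trans (add_le_add h1 h2)
  -- nest is in L_t
  have hnestL : ∀ (k t : ℕ), t ≤ T → T - t ≤ k → ∀ X, AdaptedBdd 𝔉 P T X →
      InLinf 𝔉 P t (nest ρ T X t) := by
    intro k
    induction k with
    | zero =>
      intro t ht hk X hX
      rw [nest, dif_neg (by omega : ¬ t < T)]
      exact hX t ht
    | succ k ih =>
      intro t ht hk X hX
      by_cases h : t < T
      · rw [nest, dif_pos h]
        have hY : InLinf 𝔉 P (t+1) (nest ρ T X (t+1)) := ih (t+1) h (by omega) X hX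
        exact haddL t _ _ (hX t ht)
          (hmem t ht _ (hWAd t _ hY))
      · rw [nest, dif_neg h]
        exact hX t ht
  -- time consistency gives a.e. equality
  have htceq : ∀ (t : ℕ), t < T → ∀ X Z, AdaptedBdd 𝔉 P T X → AdaptedBdd 𝔉 P T Z →
      (∀ τ, t ≤ τ → τ < t + 1 → X τ =ᵐ[P] Z τ) →
      ρ (t+1) X =ᵐ[P] ρ (t+1) Z → ρ t X =ᵐ[P] ρ t Z := by
    intro t ht X Z hX hZ hag he
    have h1 := htc t (t+1) (by omega) ht X Z hX hZ hag he.le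
    have h2 := htc t (t+1) (by omega) ht Z X hZ hX
      (fun τ h1' h2' => (hag τ h1' h2').symm) he.symm.le
    exact Filter.EventuallyLE.antisymm h1 h2
  -- main induction
  suffices H : ∀ (k t : ℕ), t ≤ T → T - t ≤ k → ∀ X : ℕ → Ω → ℝ, AdaptedBdd 𝔉 P T X →
      ρ t X =ᵐ[P] nest ρ T X t by
    intro t ht X hX
    exact H (T - t) t ht le_rfl X hX
  intro k
  induction k with
  | zero =>
    intro t ht hk X hX
    rw [nest, dif_neg (by omega : ¬ t < T)]
    have h1 := htrans t ht X hX
    have h2 : ρ t (Function.update X t (fun _ => (0:ℝ))) =ᵐ[P] fun _ => (0:ℝ) := by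
      refine (hdep t ht _ _ (hupdAd t X hX) hzeroAd fun τ h1' h2' => ?_).trans
        (hzero t ht)
      have hτt : τ = t := by omega
      subst hτt
      rw [Function.update_self]
    refine h1.trans ?_
    filter_upwards [h2] with ω hω
    simp [hω]
  | succ k ih =>
    intro t ht hk X hX
    by_cases h : t < T
    · set Y := nest ρ T X (t+1) with hYdef
      set W : ℕ → Ω → ℝ := fun τ => if τ = t + 1 then Y else fun _ => (0:ℝ) with hWdef
      have hYL : InLinf 𝔉 P (t+1) Y := hnestL (T - (t+1)) (t+1) h le_rfl X hX
      have hWAd' : AdaptedBdd 𝔉 P T W := hWAd t Y hYL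
      have hX' : AdaptedBdd 𝔉 P T (Function.update X t (fun _ => (0:ℝ))) := hupdAd t X hX
      -- IH: ρ (t+1) X =ᵐ Y
      have hIH : ρ (t+1) X =ᵐ[P] Y := ih (t+1) h (by omega) X hX
      -- ρ (t+1) X' =ᵐ ρ (t+1) X
      have e1 : ρ (t+1) (Function.update X t (fun _ => (0:ℝ))) =ᵐ[P] ρ (t+1) X := by
        refine hdep (t+1) h _ _ hX' hX fun τ h1' h2' => ?_
        rw [Function.update_of_ne (by omega : τ ≠ t)]
      -- ρ (t+1) W =ᵐ Y
      have e2 : ρ (t+1) W =ᵐ[P] Y := by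
        have ht1 := htrans (t+1) h W hWAd'
        have hz : ρ (t+1) (Function.update W (t+1) (fun _ => (0:ℝ))) =ᵐ[P]
            fun _ => (0:ℝ) := by
          refine (hdep (t+1) h _ _ (hupdAd (t+1) W hWAd') hzeroAd
            fun τ h1' h2' => ?_).trans (hzero (t+1) h)
          rcases eq_or_ne τ (t+1) with rfl | hne
          · rw [Function.update_self]
          · rw [Function.update_of_ne hne, hWdef]
            simp [if_neg hne]
        refine ht1.trans ?_
        filter_upwards [hz] with ω hω
        simp only [hω]
        rw [hWdef]
        simp
      -- ρ t X' =ᵐ ρ t W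
      have e3 : ρ t (Function.update X t (fun _ => (0:ℝ))) =ᵐ[P] ρ t W := by
        refine htceq t h _ _ hX' hWAd' (fun τ h1' h2' => ?_)
          ((e1.trans hIH).trans e2.symm)
        have hτ : τ = t := by omega
        subst hτ
        rw [Function.update_self, hWdef]
        simp [(by omega : τ ≠ τ + 1)]
      -- conclude
      rw [nest, dif_pos h]
      refine (htrans t (le_of_lt h) X hX).trans ?_
      filter_upwards [e3] with ω hω
      rw [hω]
      rfl
    · rw [nest, dif_neg h]
      have h1 := htrans t ht X hX
      have h2 : ρ t (Function.update X t (fun _ => (0:ℝ))) =ᵐ[P] fun _ => (0:ℝ) := by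
        refine (hdep t ht _ _ (hupdAd t X hX) hzeroAd fun τ h1' h2' => ?_).trans
          (hzero t ht)
        have hτt : τ = t := by omega
        subst hτt
        rw [Function.update_self]
      refine h1.trans ?_
      filter_upwards [h2] with ω hω
      simp [hω]
end

section
/- Let G : ℝ → ℝ be strictly convex with subgradient G′, and define the scoring function S(𝔞, y) := G(y) − G(𝔞) + G′(𝔞)(𝔞 − y). Let Y be an integrable real-valued random variable with E|G(Y)| < ∞. Then S is strictly consistent for the mean: E[S(E[Y], Y)] ≤ E[S(𝔞, Y)] for every 𝔞 ∈ ℝ, with strict inequality whenever 𝔞 ≠ E[Y]. -/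
/-!
Averaging the score over `Y` gives `E[S(a, Y)] = E[G(Y)] - G(a) + G'(a)(a - E[Y])`, so
`E[S(a, Y)] - E[S(E[Y], Y)] = G(E[Y]) - G(a) - G'(a)(E[Y] - a)`, the Bregman divergence of `G`
from `a` to `E[Y]`. The subgradient inequality makes it nonnegative, and strict convexity makes
it positive for `a ≠ E[Y]`.
-/

open MeasureTheory

def bregmanScore (G G' : ℝ → ℝ) (a y : ℝ) : ℝ := G y - G a + G' a * (a - y)

section

variable {Ω : Type*} [MeasurableSpace Ω] {P : Measure Ω} [IsProbabilityMeasure P]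
  {G G' : ℝ → ℝ} {Y : Ω → ℝ}

theorem integral_bregmanScore (hY : Integrable Y P) (hGY : Integrable (fun ω => G (Y ω)) P)
    (a : ℝ) :
    ∫ ω, bregmanScore G G' a (Y ω) ∂P
      = (∫ ω, G (Y ω) ∂P) - G a + G' a * (a - ∫ ω, Y ω ∂P) := by
  have hGY_sub : Integrable (fun ω => G (Y ω) - G a) P := hGY.sub (integrable_const _)
  have hlin : Integrable (fun ω => G' a * (a - Y ω)) P := ((integrable_const a).sub hY).const_mul _
  unfold bregmanScore
  rw [integral_add hGY_sub hlin, integral_sub hGY (integrable_const _), integral_const_mul,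
    integral_sub (integrable_const a) hY]
  simp

theorem integral_bregmanScore_sub_integral_bregmanScore_mean (hY : Integrable Y P)
    (hGY : Integrable (fun ω => G (Y ω)) P) (a : ℝ) :
    ∫ ω, bregmanScore G G' a (Y ω) ∂P - ∫ ω, bregmanScore G G' (∫ ω', Y ω' ∂P) (Y ω) ∂P
      = G (∫ ω, Y ω ∂P) - (G a + G' a * ((∫ ω, Y ω ∂P) - a)) := by
  rw [integral_bregmanScore hY hGY, integral_bregmanScore hY hGY]
  ring

end

theorem mean_score_strictly_consistent_general {Ω : Type*} [MeasurableSpace Ω] (P : Measure Ω)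
    [IsProbabilityMeasure P] (G G' : ℝ → ℝ)
    -- G is strictly convex with subgradient G'
    (hG : ∀ x y : ℝ, G x + G' x * (y - x) ≤ G y)
    (hGstrict : ∀ x y : ℝ, y ≠ x → G x + G' x * (y - x) < G y)
    (Y : Ω → ℝ) (hY : Integrable Y P)
    (hGY : Integrable (fun ω => G (Y ω)) P)
    (S : ℝ → ℝ → ℝ)
    (hS : ∀ a y : ℝ, S a y = G y - G a + G' a * (a - y)) :
    (∀ a : ℝ, ∫ ω, S (∫ ω', Y ω' ∂P) (Y ω) ∂P ≤ ∫ ω, S a (Y ω) ∂P) ∧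
    (∀ a : ℝ, a ≠ ∫ ω', Y ω' ∂P →
      ∫ ω, S (∫ ω', Y ω' ∂P) (Y ω) ∂P < ∫ ω, S a (Y ω) ∂P) := by
  obtain rfl : S = bregmanScore G G' := funext₂ hS
  have gap := integral_bregmanScore_sub_integral_bregmanScore_mean (G' := G') hY hGY
  refine ⟨fun a => ?_, fun a ha => ?_⟩
  · linarith [gap a, hG a (∫ ω, Y ω ∂P)]
  · linarith [gap a, hGstrict a (∫ ω, Y ω ∂P) (Ne.symm ha)]

/-- The scoring function `S(𝔞,y) = G(y) − G(𝔞) + G′(𝔞)(𝔞 − y)`, built from a strictly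
convex `G` with subgradient `G′`, is strictly consistent for the mean. -/
theorem mean_score_strictly_consistent {Ω : Type*} [MeasurableSpace Ω] (P : Measure Ω)
    [IsProbabilityMeasure P] (G G' : ℝ → ℝ)
    -- G is strictly convex with subgradient G'
    (hG : ∀ x y : ℝ, G x + G' x * (y - x) ≤ G y)
    (hGstrict : ∀ x y : ℝ, y ≠ x → G x + G' x * (y - x) < G y)
    (Y : Ω → ℝ) (hYm : Measurable Y) (hY : Integrable Y P)
    (hGY : Integrable (fun ω => G (Y ω)) P)
    (S : ℝ → ℝ → ℝ)
    (hS : ∀ a y : ℝ, S a y = G y - G a + G' a * (a - y)) :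
    (∀ a : ℝ, ∫ ω, S (∫ ω', Y ω' ∂P) (Y ω) ∂P ≤ ∫ ω, S a (Y ω) ∂P) ∧
    (∀ a : ℝ, a ≠ ∫ ω', Y ω' ∂P →
      ∫ ω, S (∫ ω', Y ω' ∂P) (Y ω) ∂P < ∫ ω, S a (Y ω) ∂P) :=
  mean_score_strictly_consistent_general P G G' hG hGstrict Y hY hGY S hS
end

section
/- Let α ∈ (0,1), let G : ℝ → ℝ be nondecreasing, and define the scoring function S(𝔞, y) := (1{y ≤ 𝔞} − α)(G(𝔞) − G(y)). Let Y be a real-valued random variable with E|G(Y)| < ∞, and let q be any α-quantile of Y, i.e. P(Y < q) ≤ α ≤ P(Y ≤ q). Then S is consistent for the α-quantile: E[S(q, Y)] ≤ E[S(𝔞, Y)] for every 𝔞 ∈ ℝ. Moreover, if G is strictly increasing and Y has a unique α-quantile q, then the inequality is strict whenever 𝔞 ≠ q. -/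
open MeasureTheory

/-!
For `b ≤ a` the increment of the score is sandwiched pointwise,
`(1{y ≤ b} - α) (G a - G b) ≤ S(a, y) - S(b, y) ≤ (1{y < a} - α) (G a - G b)`,
so `E S(a, Y) - E S(b, Y)` lies between `(P(Y ≤ b) - α) (G a - G b)` and
`(P(Y < a) - α) (G a - G b)`. For a quantile `q` the two defining inequalities make the
gap from `q` to any `a` nonnegative. For strictness, pick `b` strictly between `q` and `a`:
it is not a quantile, so `P(Y ≤ b) > α` (if `q < b`) or `P(Y < b) < α` (if `b < q`), and
strict monotonicity of `G` makes the gap between `b` and `a` strictly positive.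
-/

def IsQuantile {Ω : Type*} [MeasurableSpace Ω] (P : Measure Ω) (Y : Ω → ℝ) (α q : ℝ) : Prop :=
  (P {ω | Y ω < q}).toReal ≤ α ∧ α ≤ (P {ω | Y ω ≤ q}).toReal

noncomputable def quantileScore (α : ℝ) (G : ℝ → ℝ) (a y : ℝ) : ℝ :=
  ((if y ≤ a then (1:ℝ) else 0) - α) * (G a - G y)

section

variable {Ω : Type*} [MeasurableSpace Ω] {P : Measure Ω} {Y : Ω → ℝ} {α q : ℝ}

theorem integral_indicator_one_sub_mul [IsProbabilityMeasure P] {t : Set Ω} (ht : MeasurableSet t)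
    (α c : ℝ) : ∫ ω, (t.indicator 1 ω - α) * c ∂P = (P.real t - α) * c := by
  have h1 : Integrable (t.indicator (1 : Ω → ℝ)) P := (integrable_const 1).indicator ht
  rw [integral_mul_const, integral_sub h1 (integrable_const α),
    integral_indicator_one ht, integral_const, probReal_univ, one_smul]

namespace IsQuantile

variable [IsFiniteMeasure P]

theorem lt_measureReal_of_gt (hq : IsQuantile P Y α q)
    (huniq : ∀ q', IsQuantile P Y α q' → q' = q)
    {b : ℝ} (hqb : q < b) : α < P.real {ω | Y ω ≤ b} := by
  by_contra! hb
  have hlt : P.real {ω | Y ω < b} ≤ P.real {ω | Y ω ≤ b} :=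
    measureReal_mono fun ω (hω : Y ω < b) => hω.le
  have hle : P.real {ω | Y ω ≤ q} ≤ P.real {ω | Y ω ≤ b} :=
    measureReal_mono fun ω (hω : Y ω ≤ q) => hω.trans hqb.le
  exact hqb.ne' (huniq b ⟨hlt.trans hb, hq.2.trans hle⟩)

theorem measureReal_lt_of_lt (hq : IsQuantile P Y α q)
    (huniq : ∀ q', IsQuantile P Y α q' → q' = q)
    {b : ℝ} (hbq : b < q) : P.real {ω | Y ω < b} < α := by
  by_contra! hb
  have hle : P.real {ω | Y ω < b} ≤ P.real {ω | Y ω ≤ b} :=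
    measureReal_mono fun ω (hω : Y ω < b) => hω.le
  have hlt : P.real {ω | Y ω < b} ≤ P.real {ω | Y ω < q} :=
    measureReal_mono fun ω (hω : Y ω < b) => hω.trans hbq
  exact hbq.ne (huniq b ⟨hlt.trans hq.1, hb.trans hle⟩)

end IsQuantile

namespace quantileScore

variable {G : ℝ → ℝ}

theorem eq_ite_lt (a y : ℝ) :
    quantileScore α G a y = ((if y < a then (1:ℝ) else 0) - α) * (G a - G y) := by
  rcases eq_or_ne y a with rfl | hya
  · simp [quantileScore]
  · simp only [quantileScore, hya.le_iff_lt]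

theorem indicator_Iic_mul_le_sub (hG : Monotone G) {b a : ℝ} (hba : b ≤ a) (y : ℝ) :
    ((Set.Iic b).indicator 1 y - α) * (G a - G b) ≤
      quantileScore α G a y - quantileScore α G b y := by
  simp only [quantileScore, Set.indicator_apply, Set.mem_Iic, Pi.one_apply]
  rcases le_or_gt y b with hyb | hby
  · split_ifs <;> linarith
  rcases le_or_gt y a with hya | hay
  · have := hG hya
    split_ifs <;> linarith
  · split_ifs <;> linarith

theorem sub_le_indicator_Iio_mul (hG : Monotone G) {b a : ℝ} (hba : b ≤ a) (y : ℝ) :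
    quantileScore α G a y - quantileScore α G b y ≤
      ((Set.Iio a).indicator 1 y - α) * (G a - G b) := by
  simp only [eq_ite_lt, Set.indicator_apply, Set.mem_Iio, Pi.one_apply]
  rcases lt_or_ge y b with hyb | hby
  · split_ifs <;> linarith
  rcases lt_or_ge y a with hya | hay
  · have := hG hby
    split_ifs <;> linarith
  · split_ifs <;> linarith

theorem integrable_comp [IsFiniteMeasure P] (hY : Measurable Y)
    (hGY : Integrable (fun ω => G (Y ω)) P) (a : ℝ) :
    Integrable (fun ω => quantileScore α G a (Y ω)) P := by
  refine ((integrable_const (G a)).sub hGY).bdd_mul (c := 1 + |α|) ?_ (.of_forall fun ω => ?_)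
  · exact (Measurable.ite (measurableSet_le hY measurable_const) measurable_const
      measurable_const |>.sub_const α).aestronglyMeasurable
  · rw [Real.norm_eq_abs]
    exact (abs_sub _ _).trans (by gcongr; split_ifs <;> simp)

theorem measureReal_le_mul_le_integral_sub [IsProbabilityMeasure P] (hG : Monotone G)
    (hY : Measurable Y) (hGY : Integrable (fun ω => G (Y ω)) P) {b a : ℝ} (hba : b ≤ a) :
    (P.real {ω | Y ω ≤ b} - α) * (G a - G b) ≤
      ∫ ω, quantileScore α G a (Y ω) ∂P - ∫ ω, quantileScore α G b (Y ω) ∂P := by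
  have ht : MeasurableSet {ω | Y ω ≤ b} := hY measurableSet_Iic
  rw [← integral_indicator_one_sub_mul ht, ← integral_sub (integrable_comp hY hGY a)
    (integrable_comp hY hGY b)]
  refine integral_mono
    (((integrable_const 1).indicator ht).sub (integrable_const α) |>.mul_const _)
    ((integrable_comp hY hGY a).sub (integrable_comp hY hGY b)) fun ω => ?_
  exact indicator_Iic_mul_le_sub hG hba (Y ω)

theorem integral_sub_le_measureReal_lt_mul [IsProbabilityMeasure P] (hG : Monotone G)
    (hY : Measurable Y) (hGY : Integrable (fun ω => G (Y ω)) P) {b a : ℝ} (hba : b ≤ a) :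
    ∫ ω, quantileScore α G a (Y ω) ∂P - ∫ ω, quantileScore α G b (Y ω) ∂P ≤
      (P.real {ω | Y ω < a} - α) * (G a - G b) := by
  have ht : MeasurableSet {ω | Y ω < a} := hY measurableSet_Iio
  rw [← integral_indicator_one_sub_mul ht, ← integral_sub (integrable_comp hY hGY a)
    (integrable_comp hY hGY b)]
  refine integral_mono ((integrable_comp hY hGY a).sub (integrable_comp hY hGY b))
    (((integrable_const 1).indicator ht).sub (integrable_const α) |>.mul_const _) fun ω => ?_
  exact sub_le_indicator_Iio_mul hG hba (Y ω)

theorem integral_le_of_isQuantile [IsProbabilityMeasure P] (hG : Monotone G) (hY : Measurable Y)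
    (hGY : Integrable (fun ω => G (Y ω)) P) (hq : IsQuantile P Y α q) (a : ℝ) :
    ∫ ω, quantileScore α G q (Y ω) ∂P ≤ ∫ ω, quantileScore α G a (Y ω) ∂P := by
  rcases le_total q a with hqa | haq
  · have hgap := measureReal_le_mul_le_integral_sub hG hY hGY (α := α) hqa
    have : 0 ≤ (P.real {ω | Y ω ≤ q} - α) * (G a - G q) :=
      mul_nonneg (sub_nonneg.2 hq.2) (sub_nonneg.2 (hG hqa))
    linarith
  · have hgap := integral_sub_le_measureReal_lt_mul hG hY hGY (α := α) haq
    have : (P.real {ω | Y ω < q} - α) * (G q - G a) ≤ 0 :=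
      mul_nonpos_of_nonpos_of_nonneg (sub_nonpos.2 hq.1) (sub_nonneg.2 (hG haq))
    linarith

theorem integral_lt_of_isQuantile_unique [IsProbabilityMeasure P] (hG : StrictMono G)
    (hY : Measurable Y) (hGY : Integrable (fun ω => G (Y ω)) P) (hq : IsQuantile P Y α q)
    (huniq : ∀ q', IsQuantile P Y α q' → q' = q) {a : ℝ} (ha : a ≠ q) :
    ∫ ω, quantileScore α G q (Y ω) ∂P < ∫ ω, quantileScore α G a (Y ω) ∂P := by
  rcases ha.lt_or_gt with haq | hqa
  · obtain ⟨b, hab, hbq⟩ := exists_between haq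
    have hgap := integral_sub_le_measureReal_lt_mul hG.monotone hY hGY (α := α) hab.le
    have : (P.real {ω | Y ω < b} - α) * (G b - G a) < 0 :=
      mul_neg_of_neg_of_pos (sub_neg.2 (hq.measureReal_lt_of_lt huniq hbq)) (sub_pos.2 (hG hab))
    linarith [integral_le_of_isQuantile hG.monotone hY hGY hq b]
  · obtain ⟨b, hqb, hba⟩ := exists_between hqa
    have hgap := measureReal_le_mul_le_integral_sub hG.monotone hY hGY (α := α) hba.le
    have : 0 < (P.real {ω | Y ω ≤ b} - α) * (G a - G b) :=
      mul_pos (sub_pos.2 (hq.lt_measureReal_of_gt huniq hqb)) (sub_pos.2 (hG hba))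
    linarith [integral_le_of_isQuantile hG.monotone hY hGY hq b]

end quantileScore

end

theorem quantile_score_consistent_general {Ω : Type*} [MeasurableSpace Ω] (P : Measure Ω)
    [IsProbabilityMeasure P] (α : ℝ)
    (G : ℝ → ℝ) (hG : Monotone G)
    (Y : Ω → ℝ) (hYm : Measurable Y) (hGY : Integrable (fun ω => G (Y ω)) P)
    (S : ℝ → ℝ → ℝ)
    (hS : ∀ a y : ℝ, S a y = ((if y ≤ a then (1:ℝ) else 0) - α) * (G a - G y))
    (q : ℝ) (hq : IsQuantile P Y α q) :
    (∀ a : ℝ, ∫ ω, S q (Y ω) ∂P ≤ ∫ ω, S a (Y ω) ∂P) ∧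
    (StrictMono G → (∀ q' : ℝ, IsQuantile P Y α q' → q' = q) →
      ∀ a : ℝ, a ≠ q → ∫ ω, S q (Y ω) ∂P < ∫ ω, S a (Y ω) ∂P) := by
  obtain rfl : S = quantileScore α G := funext₂ hS
  exact ⟨quantileScore.integral_le_of_isQuantile hG hYm hGY hq,
    fun hGs huniq _ ha => quantileScore.integral_lt_of_isQuantile_unique hGs hYm hGY hq huniq ha⟩

/-- The scoring function `S(𝔞,y) = (1{y ≤ 𝔞} − α)(G(𝔞) − G(y))` is consistent for the
`α`-quantile, and strictly consistent when `G` is strictly increasing and the `α`-quantile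
is unique. -/
theorem quantile_score_consistent {Ω : Type*} [MeasurableSpace Ω] (P : Measure Ω)
    [IsProbabilityMeasure P] (α : ℝ) (hα : α ∈ Set.Ioo (0:ℝ) 1)
    (G : ℝ → ℝ) (hG : Monotone G)
    (Y : Ω → ℝ) (hYm : Measurable Y) (hGY : Integrable (fun ω => G (Y ω)) P)
    (S : ℝ → ℝ → ℝ)
    (hS : ∀ a y : ℝ, S a y = ((if y ≤ a then (1:ℝ) else 0) - α) * (G a - G y))
    (q : ℝ) (hq : IsQuantile P Y α q) :
    (∀ a : ℝ, ∫ ω, S q (Y ω) ∂P ≤ ∫ ω, S a (Y ω) ∂P) ∧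
    (StrictMono G → (∀ q' : ℝ, IsQuantile P Y α q' → q' = q) →
      ∀ a : ℝ, a ≠ q → ∫ ω, S q (Y ω) ∂P < ∫ ω, S a (Y ω) ∂P) :=
  quantile_score_consistent_general P α G hG Y hYm hGY S hS q hq
end

section
/- Let α ∈ (0,1) and let Y be an integrable real-valued random variable with a unique α-quantile. Let G₂ : ℝ → ℝ be strictly convex with subgradient G₂′ and let G₁ : ℝ → ℝ be such that for every 𝔞₂ ∈ ℝ the map x ↦ G₁(x) − (x/(1−α)) G₂′(𝔞₂) is strictly increasing, and assume E|G₁(Y)| < ∞ and E|G₂(Y)| < ∞. Define, for 𝔞₁ ≤ 𝔞₂, the scoring function S(𝔞₁, 𝔞₂, y) := (1{y ≤ 𝔞₁} − α)(G₁(𝔞₁) − G₁(y)) − G₂(𝔞₂) + G₂(y) + G₂′(𝔞₂)[ 𝔞₂ + (1/(1−α))( (1{y > 𝔞₁} − (1−α)) 𝔞₁ − 1{y > 𝔞₁} y ) ]. Then S is strictly consistent for the pair (VaR_α, CVaR_α): for every (𝔞₁, 𝔞₂) with 𝔞₁ ≤ 𝔞₂ and (𝔞₁, 𝔞₂) ≠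 (VaR_α(Y), CVaR_α(Y)), one has E[S(VaR_α(Y), CVaR_α(Y), Y)] < E[S(𝔞₁, 𝔞₂, Y)]. -/
open MeasureTheory

/-!
Put `H_b x = G₁ x - x / (1 - α) * G₂' b`. Pointwise, the score equals the generalized piecewise
linear score `(1{y ≤ a₁} - α) (H_{a₂} a₁ - H_{a₂} y)` plus a term free of `a₁`; as `H_{a₂}` is
strictly increasing, the expected score is minimal in `a₁` exactly at the `α`-quantiles. At the
quantile `q`, the Rockafellar–Uryasev formula `CVaR_α(Y) = q + E (Y - q)⁺ / (1 - α)` turns the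
expected score into `const - G₂ b + G₂' b * (b - CVaR_α(Y))` as a function of `b = a₂`, whose unique
minimiser is `CVaR_α(Y)` by strict convexity of `G₂`. The Rockafellar–Uryasev formula follows from
the layer-cake formula applied on both sides, since by right continuity of the distribution
function `VaR_u(Y) ≤ t ↔ u ≤ P(Y ≤ t)` for `u ∈ (0, 1)`.
-/

open ProbabilityTheory Set Filter Topology

theorem StieltjesFunction.sInf_preimage_Ici_le_iff (f : StieltjesFunction ℝ) {a b u t : ℝ}
    (ha : Tendsto f atBot (𝓝 a)) (hb : Tendsto f atTop (𝓝 b)) (hu : u ∈ Ioo a b) :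
    sInf (f ⁻¹' Ici u) ≤ t ↔ u ≤ f t := by
  obtain ⟨x₀, hx₀⟩ := (ha.eventually (gt_mem_nhds hu.1)).exists_forall_of_atBot
  have hbdd : BddBelow (f ⁻¹' Ici u) :=
    ⟨x₀, fun x hx => le_of_not_gt fun hlt => (hx₀ x hlt.le).not_ge hx⟩
  refine ⟨fun h => ?_, fun h => csInf_le hbdd h⟩
  have hne : (f ⁻¹' Ici u).Nonempty :=
    ((hb.eventually (lt_mem_nhds hu.2)).exists).imp fun _ hx => hx.le
  have hinf : u ≤ f (sInf (f ⁻¹' Ici u)) := by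
    refine ge_of_tendsto ((f.right_continuous _).mono Ioi_subset_Ici_self) ?_
    filter_upwards [self_mem_nhdsWithin] with x hx
    obtain ⟨y, hy, hyx⟩ := exists_lt_of_csInf_lt hne hx
    exact le_trans hy (f.mono hyx.le)
  exact hinf.trans (f.mono h)

theorem IsQuantile.nonneg {Ω : Type*} [MeasurableSpace Ω] {P : Measure Ω} {Y : Ω → ℝ}
    {α q : ℝ} (hq : IsQuantile P Y α q) : 0 ≤ α :=
  ENNReal.toReal_nonneg.trans hq.1

theorem quantileScore_sub_ge {α p : ℝ} {H : ℝ → ℝ} (hH : Monotone H) {A : Set ℝ}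
    (hA₁ : Iio p ⊆ A) (hA₂ : A ⊆ Iic p) (x y : ℝ) :
    (A.indicator 1 y - α) * (H x - H p) ≤
      ((if y ≤ x then 1 else 0) - α) * (H x - H y)
        - ((if y ≤ p then 1 else 0) - α) * (H p - H y) := by
  set ι := A.indicator (1 : ℝ → ℝ) y
  have hι : 0 ≤ ι ∧ ι ≤ 1 := by by_cases hy : y ∈ A <;> simp [ι, hy]
  have hp : ((if y ≤ p then 1 else 0) - ι) * (H p - H y) = 0 := by
    rcases lt_trichotomy y p with hyp | rfl | hpy
    · simp [ι, hA₁ hyp, hyp.le]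
    · simp
    · simp [ι, hpy.not_ge, show y ∉ A from fun h => hpy.not_ge (hA₂ h)]
  have hx : 0 ≤ ((if y ≤ x then 1 else 0) - ι) * (H x - H y) := by
    by_cases hyx : y ≤ x
    · simpa [hyx] using mul_nonneg (sub_nonneg.2 hι.2) (sub_nonneg.2 (hH hyx))
    · simpa [hyx] using
        mul_nonpos_of_nonneg_of_nonpos hι.1 (sub_nonpos.2 (hH (not_le.1 hyx).le))
  linear_combination hx + hp

section RandomVariable

variable {Ω : Type*} [MeasurableSpace Ω] {P : Measure Ω} [IsProbabilityMeasure P] {Y : Ω → ℝ}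
  {α q : ℝ}

theorem cdf_map_eq_toReal (hY : Measurable Y) (x : ℝ) :
    cdf (P.map Y) x = (P {ω | Y ω ≤ x}).toReal := by
  have := Measure.isProbabilityMeasure_map (μ := P) hY.aemeasurable
  rw [cdf_eq_real, measureReal_def, Measure.map_apply hY measurableSet_Iic]
  rfl

theorem measure_lt_eq_ofReal_one_sub (hY : Measurable Y) (t : ℝ) :
    P {ω | t < Y ω} = ENNReal.ofReal (1 - (P {ω | Y ω ≤ t}).toReal) := by
  have hcompl : {ω | t < Y ω} = (Y ⁻¹' Iic t)ᶜ := by ext; simp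
  rw [hcompl, prob_compl_eq_one_sub (hY measurableSet_Iic),
    ENNReal.ofReal_sub _ ENNReal.toReal_nonneg, ENNReal.ofReal_one,
    ENNReal.ofReal_toReal (measure_ne_top _ _)]
  rfl

theorem exists_lt_of_lt_toReal_measure_lt (hY : Measurable Y) {a x : ℝ}
    (h : a < (P {ω | Y ω < x}).toReal) : ∃ p < x, a < (P {ω | Y ω ≤ p}).toReal := by
  have := Measure.isProbabilityMeasure_map (μ := P) hY.aemeasurable
  have hIio := (cdf (P.map Y)).measure_Iio (tendsto_cdf_atBot _) x
  rw [measure_cdf, Measure.map_apply hY measurableSet_Iio, sub_zero] at hIio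
  have hleftLim : (P {ω | Y ω < x}).toReal = Function.leftLim (cdf (P.map Y)) x := by
    rw [show {ω | Y ω < x} = Y ⁻¹' Iio x from rfl, hIio, ENNReal.toReal_ofReal]
    exact (cdf_nonneg _ (x - 1)).trans ((monotone_cdf _).le_leftLim (sub_one_lt x))
  rw [hleftLim] at h
  obtain ⟨p, hp, hpx⟩ := (((monotone_cdf _).tendsto_leftLim x).eventually
    (lt_mem_nhds h)).and self_mem_nhdsWithin |>.exists
  exact ⟨p, hpx, by rwa [← cdf_map_eq_toReal hY]⟩

theorem exists_gt_of_toReal_measure_le_lt (hY : Measurable Y) {a x : ℝ}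
    (h : (P {ω | Y ω ≤ x}).toReal < a) : ∃ p > x, (P {ω | Y ω ≤ p}).toReal < a := by
  rw [← cdf_map_eq_toReal hY] at h
  obtain ⟨p, hp, hpx⟩ := ((((cdf (P.map Y)).right_continuous x).mono
    Ioi_subset_Ici_self).eventually (gt_mem_nhds h)).and self_mem_nhdsWithin |>.exists
  exact ⟨p, hpx, by rwa [← cdf_map_eq_toReal hY]⟩

theorem VaR_le_iff (hY : Measurable Y) {u t : ℝ} (hu : u ∈ Ioo 0 1) :
    VaR P Y u ≤ t ↔ u ≤ (P {ω | Y ω ≤ t}).toReal := by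
  have := Measure.isProbabilityMeasure_map (μ := P) hY.aemeasurable
  have hset : {x | u ≤ (P {ω | Y ω ≤ x}).toReal} = cdf (P.map Y) ⁻¹' Ici u := by
    ext x; simp [cdf_map_eq_toReal hY]
  rw [VaR, hset, (cdf (P.map Y)).sInf_preimage_Ici_le_iff (tendsto_cdf_atBot _)
    (tendsto_cdf_atTop _) hu, cdf_map_eq_toReal hY]

theorem isQuantile_VaR (hY : Measurable Y) (hα : α ∈ Ioo 0 1) : IsQuantile P Y α (VaR P Y α) := by
  refine ⟨le_of_not_gt fun h => ?_, (VaR_le_iff hY hα).1 le_rfl⟩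
  obtain ⟨p, hp, hαp⟩ := exists_lt_of_lt_toReal_measure_lt hY h
  exact hp.not_ge ((VaR_le_iff hY hα).2 hαp.le)

theorem monotoneOn_VaR (hY : Measurable Y) : MonotoneOn (VaR P Y) (Ioo 0 1) :=
  fun _ hu _ hv huv => (VaR_le_iff hY hu).2 (huv.trans ((VaR_le_iff hY hv).1 le_rfl))

theorem IsQuantile.le_VaR (hY : Measurable Y) {u : ℝ} (hq : IsQuantile P Y α q)
    (hu : u ∈ Ioo α 1) : q ≤ VaR P Y u := by
  refine le_of_not_gt fun hlt => hu.1.not_ge ?_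
  calc u ≤ (P {ω | Y ω ≤ VaR P Y u}).toReal :=
        (VaR_le_iff hY ⟨hq.nonneg.trans_lt hu.1, hu.2⟩).1 le_rfl
    _ ≤ (P {ω | Y ω < q}).toReal :=
      ENNReal.toReal_mono (measure_ne_top _ _) (measure_mono fun ω h => h.trans_lt hlt)
    _ ≤ α := hq.1

theorem IsQuantile.volume_lt_VaR_inter_Ioo (hY : Measurable Y) {t : ℝ}
    (hq : IsQuantile P Y α q) (ht : q ≤ t) :
    volume ({u | t < VaR P Y u} ∩ Ioo α 1) = P {ω | t < Y ω} := by
  have hαt : α ≤ (P {ω | Y ω ≤ t}).toReal := hq.2.trans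
    (ENNReal.toReal_mono (measure_ne_top _ _) (measure_mono fun ω h => le_trans h ht))
  have hiff : ∀ u ∈ Ioo α 1, t < VaR P Y u ↔ (P {ω | Y ω ≤ t}).toReal < u := fun u hu => by
    simpa only [not_le] using (VaR_le_iff hY ⟨hq.nonneg.trans_lt hu.1, hu.2⟩).not
  have hslice : {u | t < VaR P Y u} ∩ Ioo α 1 = Ioo (P {ω | Y ω ≤ t}).toReal 1 := by
    ext u
    constructor
    · rintro ⟨h, hu⟩
      exact ⟨(hiff u hu).1 h, hu.2⟩
    · rintro ⟨h, hu⟩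
      have hu' : u ∈ Ioo α 1 := ⟨hαt.trans_lt h, hu⟩
      exact ⟨(hiff u hu').2 h, hu'⟩
  rw [hslice, Real.volume_Ioo, measure_lt_eq_ofReal_one_sub hY]

theorem IsQuantile.ae_nonneg_VaR_sub (hY : Measurable Y) (hq : IsQuantile P Y α q) :
    0 ≤ᵐ[volume.restrict (Ioo α 1)] fun u => VaR P Y u - q :=
  (ae_restrict_iff' measurableSet_Ioo).2 <|
    ae_of_all _ fun _ hu => sub_nonneg.2 (hq.le_VaR hY hu)

theorem IsQuantile.aemeasurable_VaR (hY : Measurable Y) (hq : IsQuantile P Y α q) :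
    AEMeasurable (VaR P Y) (volume.restrict (Ioo α 1)) :=
  aemeasurable_restrict_of_monotoneOn measurableSet_Ioo <|
    (monotoneOn_VaR hY).mono fun _ hu => ⟨hq.nonneg.trans_lt hu.1, hu.2⟩

theorem IsQuantile.lintegral_ofReal_VaR_sub (hY : Measurable Y) (hq : IsQuantile P Y α q) :
    ∫⁻ u in Ioo α 1, ENNReal.ofReal (VaR P Y u - q) =
      ∫⁻ ω, ENNReal.ofReal (max (Y ω - q) 0) ∂P := by
  rw [lintegral_eq_lintegral_meas_lt _ (hq.ae_nonneg_VaR_sub hY)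
      ((hq.aemeasurable_VaR hY).sub_const q),
    lintegral_eq_lintegral_meas_lt (f := fun ω => max (Y ω - q) 0) _
      (ae_of_all _ fun _ => le_max_right _ _) ((hY.sub_const q).max measurable_const).aemeasurable]
  refine setLIntegral_congr_fun measurableSet_Ioi fun s (hs : 0 < s) => ?_
  have hmax : {ω | s < max (Y ω - q) 0} = {ω | q + s < Y ω} := by
    ext ω; simp [hs.not_gt, lt_sub_iff_add_lt']
  simp_rw [Measure.restrict_apply' measurableSet_Ioo, lt_sub_iff_add_lt', hmax]
  exact hq.volume_lt_VaR_inter_Ioo hY (le_add_of_nonneg_right hs.le)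

theorem IsQuantile.CVaR_eq (hY : Measurable Y) (hYint : Integrable Y P) (hα : α < 1)
    (hq : IsQuantile P Y α q) :
    CVaR P Y α = q + (1 - α)⁻¹ * ∫ ω, max (Y ω - q) 0 ∂P := by
  have hmax : Integrable (fun ω => max (Y ω - q) 0) P := (hYint.sub (integrable_const q)).pos_part
  have hlint : ∫⁻ u in Ioo α 1, ENNReal.ofReal (VaR P Y u - q)
      = ENNReal.ofReal (∫ ω, max (Y ω - q) 0 ∂P) := by
    rw [hq.lintegral_ofReal_VaR_sub hY, ofReal_integral_eq_lintegral_ofReal hmax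
      (ae_of_all _ fun _ => le_max_right _ _)]
  have hsm := ((hq.aemeasurable_VaR hY).sub_const q).aestronglyMeasurable
  have hint : IntegrableOn (fun u => VaR P Y u - q) (Ioo α 1) := by
    refine ⟨hsm, ?_⟩
    rw [hasFiniteIntegral_iff_ofReal (hq.ae_nonneg_VaR_sub hY), hlint]
    exact ENNReal.ofReal_lt_top
  have hsub : ∫ u in Ioo α 1, (VaR P Y u - q) = ∫ ω, max (Y ω - q) 0 ∂P := by
    rw [integral_eq_lintegral_of_nonneg_ae (hq.ae_nonneg_VaR_sub hY) hsm, hlint,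
      ENNReal.toReal_ofReal (integral_nonneg fun ω => le_max_right (Y ω - q) 0)]
  have hconst : IntegrableOn (fun _ => q) (Ioo α 1) := integrableOn_const measure_Ioo_lt_top.ne
  have hVaR : IntegrableOn (VaR P Y) (Ioo α 1) :=
    (hint.add hconst).congr_fun (fun u _ => sub_add_cancel (VaR P Y u) q) measurableSet_Ioo
  rw [CVaR, intervalIntegral.integral_of_le hα.le, integral_Ioc_eq_integral_Ioo,
    ← sub_add_cancel (∫ u in Ioo α 1, VaR P Y u) (∫ u in Ioo α 1, q),
    ← integral_sub hVaR hconst, hsub, setIntegral_const, Real.volume_real_Ioo_of_le hα.le,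
    smul_eq_mul]
  field_simp [sub_ne_zero.2 hα.ne']
  ring

noncomputable def expectedQuantileScore (P : Measure Ω) (Y : Ω → ℝ) (α : ℝ) (H : ℝ → ℝ) (x : ℝ) :
    ℝ :=
  ∫ ω, ((if Y ω ≤ x then 1 else 0) - α) * (H x - H (Y ω)) ∂P

variable {H : ℝ → ℝ}

theorem integrable_quantileScore (hY : Measurable Y) (hHY : Integrable (fun ω => H (Y ω)) P)
    (x : ℝ) : Integrable (fun ω => ((if Y ω ≤ x then 1 else 0) - α) * (H x - H (Y ω))) P := by
  refine ((integrable_const (H x)).sub hHY).bdd_mul (c := 1 + |α|)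
    ((Measurable.ite (hY measurableSet_Iic) measurable_const measurable_const).sub_const
      α).aestronglyMeasurable (ae_of_all _ fun ω => ?_)
  split_ifs
  · exact (norm_sub_le _ _).trans (by simp)
  · simp

theorem expectedQuantileScore_sub_ge (hY : Measurable Y) (hH : Monotone H)
    (hHY : Integrable (fun ω => H (Y ω)) P) {A : Set ℝ} (hA : MeasurableSet A) {p : ℝ}
    (hA₁ : Iio p ⊆ A) (hA₂ : A ⊆ Iic p) (x : ℝ) :
    ((P (Y ⁻¹' A)).toReal - α) * (H x - H p) ≤
      expectedQuantileScore P Y α H x - expectedQuantileScore P Y α H p := by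
  have hind : (fun ω => A.indicator (1 : ℝ → ℝ) (Y ω)) = (Y ⁻¹' A).indicator 1 := rfl
  have hind_int : Integrable (fun ω => A.indicator (1 : ℝ → ℝ) (Y ω)) P := by
    rw [hind]; exact (integrable_const 1).indicator (hY hA)
  calc ((P (Y ⁻¹' A)).toReal - α) * (H x - H p)
      = ∫ ω, (A.indicator 1 (Y ω) - α) * (H x - H p) ∂P := by
        rw [integral_mul_const, integral_sub hind_int (integrable_const α), hind,
          integral_indicator_one (hY hA), integral_const]
        simp [measureReal_def]
    _ ≤ ∫ ω, (((if Y ω ≤ x then 1 else 0) - α) * (H x - H (Y ω))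
          - ((if Y ω ≤ p then 1 else 0) - α) * (H p - H (Y ω))) ∂P :=
        integral_mono ((hind_int.sub (integrable_const α)).mul_const _)
          ((integrable_quantileScore hY hHY x).sub (integrable_quantileScore hY hHY p))
          fun ω => quantileScore_sub_ge hH hA₁ hA₂ x (Y ω)
    _ = _ := integral_sub (integrable_quantileScore hY hHY x) (integrable_quantileScore hY hHY p)

theorem IsQuantile.expectedQuantileScore_le (hY : Measurable Y) (hH : Monotone H)
    (hHY : Integrable (fun ω => H (Y ω)) P) (hq : IsQuantile P Y α q) (x : ℝ) :
    expectedQuantileScore P Y α H q ≤ expectedQuantileScore P Y α H x := by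
  rw [← sub_nonneg]
  rcases le_total q x with hqx | hxq
  · refine le_trans ?_ (expectedQuantileScore_sub_ge hY hH hHY measurableSet_Iic
      Iio_subset_Iic_self subset_rfl x)
    exact mul_nonneg (sub_nonneg.2 hq.2) (sub_nonneg.2 (hH hqx))
  · refine le_trans ?_ (expectedQuantileScore_sub_ge hY hH hHY measurableSet_Iio
      subset_rfl Iio_subset_Iic_self x)
    exact mul_nonneg_of_nonpos_of_nonpos (sub_nonpos.2 hq.1) (sub_nonpos.2 (hH hxq))

theorem IsQuantile.expectedQuantileScore_lt (hY : Measurable Y) (hH : StrictMono H)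
    (hHY : Integrable (fun ω => H (Y ω)) P) {x : ℝ} (hq : IsQuantile P Y α q)
    (hx : ¬IsQuantile P Y α x) :
    expectedQuantileScore P Y α H q < expectedQuantileScore P Y α H x := by
  obtain ⟨p, hp⟩ : ∃ p, 0 < ((P {ω | Y ω ≤ p}).toReal - α) * (H x - H p) := by
    rcases not_and_or.1 hx with hlt | hlt
    · obtain ⟨p, hpx, hαp⟩ := exists_lt_of_lt_toReal_measure_lt hY (not_le.1 hlt)
      exact ⟨p, mul_pos (sub_pos.2 hαp) (sub_pos.2 (hH hpx))⟩
    · obtain ⟨p, hpx, hpα⟩ := exists_gt_of_toReal_measure_le_lt hY (not_le.1 hlt)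
      exact ⟨p, mul_pos_of_neg_of_neg (sub_neg.2 hpα) (sub_neg.2 (hH hpx))⟩
  calc expectedQuantileScore P Y α H q ≤ expectedQuantileScore P Y α H p :=
        hq.expectedQuantileScore_le hY hH.monotone hHY p
    _ < expectedQuantileScore P Y α H x := sub_pos.1 <| hp.trans_le <|
        expectedQuantileScore_sub_ge hY hH.monotone hHY measurableSet_Iic Iio_subset_Iic_self
          subset_rfl x

end RandomVariable

noncomputable def varCVaRScore (α : ℝ) (G₁ G₂ G₂' : ℝ → ℝ) (a₁ a₂ y : ℝ) : ℝ :=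
  ((if y ≤ a₁ then (1:ℝ) else 0) - α) * (G₁ a₁ - G₁ y) - G₂ a₂ + G₂ y
    + G₂' a₂ * (a₂ + (1 - α)⁻¹ *
        (((if a₁ < y then (1:ℝ) else 0) - (1 - α)) * a₁
          - (if a₁ < y then (1:ℝ) else 0) * y))

section Score

variable {α : ℝ} {G₁ G₂ G₂' : ℝ → ℝ}

theorem varCVaRScore_eq_quantileScore_add (hα : α ≠ 1) (a₁ a₂ y : ℝ) :
    varCVaRScore α G₁ G₂ G₂' a₁ a₂ y =
      ((if y ≤ a₁ then 1 else 0) - α) *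
          ((G₁ a₁ - a₁ / (1 - α) * G₂' a₂) - (G₁ y - y / (1 - α) * G₂' a₂))
        + (G₂ y - G₂ a₂ - G₂' a₂ * (y - a₂)) := by
  have h : 1 - α ≠ 0 := sub_ne_zero.2 hα.symm
  by_cases hy : y ≤ a₁
  · simp only [varCVaRScore, if_pos hy, if_neg hy.not_gt]
    field_simp
    ring
  · simp only [varCVaRScore, if_neg hy, if_pos (not_le.1 hy)]
    field_simp
    ring

theorem varCVaRScore_eq_max (hα : α ≠ 1) (a₁ a₂ y : ℝ) :
    varCVaRScore α G₁ G₂ G₂' a₁ a₂ y =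
      (((if y ≤ a₁ then 1 else 0) - α) * (G₁ a₁ - G₁ y) + G₂ y)
        + G₂' a₂ * (a₂ - (a₁ + (1 - α)⁻¹ * max (y - a₁) 0)) - G₂ a₂ := by
  have h : 1 - α ≠ 0 := sub_ne_zero.2 hα.symm
  by_cases hy : y ≤ a₁
  · simp only [varCVaRScore, if_pos hy, if_neg hy.not_gt, max_eq_right (sub_nonpos.2 hy)]
    field_simp
    ring
  · simp only [varCVaRScore, if_neg hy, if_pos (not_le.1 hy),
      max_eq_left (sub_nonneg.2 (not_le.1 hy).le)]
    field_simp
    ring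

variable {Ω : Type*} [MeasurableSpace Ω] {P : Measure Ω} [IsProbabilityMeasure P] {Y : Ω → ℝ}

theorem integral_varCVaRScore_sub (hY : Measurable Y) (hα : α ≠ 1) (hYint : Integrable Y P)
    (hG₁Y : Integrable (fun ω => G₁ (Y ω)) P) (hG₂Y : Integrable (fun ω => G₂ (Y ω)) P)
    (x p b : ℝ) :
    ∫ ω, varCVaRScore α G₁ G₂ G₂' x b (Y ω) ∂P - ∫ ω, varCVaRScore α G₁ G₂ G₂' p b (Y ω) ∂P =
      expectedQuantileScore P Y α (fun z => G₁ z - z / (1 - α) * G₂' b) x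
        - expectedQuantileScore P Y α (fun z => G₁ z - z / (1 - α) * G₂' b) p := by
  have hHY : Integrable (fun ω => G₁ (Y ω) - Y ω / (1 - α) * G₂' b) P :=
    hG₁Y.sub ((hYint.div_const _).mul_const _)
  have hrest : Integrable (fun ω => G₂ (Y ω) - G₂ b - G₂' b * (Y ω - b)) P :=
    (hG₂Y.sub (integrable_const _)).sub ((hYint.sub (integrable_const b)).const_mul _)
  simp_rw [varCVaRScore_eq_quantileScore_add hα]
  rw [integral_add (integrable_quantileScore (H := fun z => G₁ z - z / (1 - α) * G₂' b) hY hHY x)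
      hrest,
    integral_add (integrable_quantileScore (H := fun z => G₁ z - z / (1 - α) * G₂' b) hY hHY p)
      hrest, add_sub_add_right_eq_sub]
  rfl

theorem IsQuantile.integral_varCVaRScore_sub_CVaR (hY : Measurable Y) (hα : α < 1)
    (hYint : Integrable Y P) (hG₁Y : Integrable (fun ω => G₁ (Y ω)) P)
    (hG₂Y : Integrable (fun ω => G₂ (Y ω)) P) {q : ℝ} (hq : IsQuantile P Y α q) (b : ℝ) :
    ∫ ω, varCVaRScore α G₁ G₂ G₂' q b (Y ω) ∂P
        - ∫ ω, varCVaRScore α G₁ G₂ G₂' q (CVaR P Y α) (Y ω) ∂P =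
      G₂ (CVaR P Y α) - G₂ b - G₂' b * (CVaR P Y α - b) := by
  have hQ : Integrable (fun ω => ((if Y ω ≤ q then 1 else 0) - α) * (G₁ q - G₁ (Y ω))
      + G₂ (Y ω)) P :=
    (integrable_quantileScore hY hG₁Y q).add hG₂Y
  have hmax : Integrable (fun ω => max (Y ω - q) 0) P := (hYint.sub (integrable_const q)).pos_part
  have hRU : Integrable (fun ω => q + (1 - α)⁻¹ * max (Y ω - q) 0) P :=
    (integrable_const q).add (hmax.const_mul _)
  have hexpect : ∀ b', ∫ ω, varCVaRScore α G₁ G₂ G₂' q b' (Y ω) ∂P =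
      ∫ ω, (((if Y ω ≤ q then 1 else 0) - α) * (G₁ q - G₁ (Y ω)) + G₂ (Y ω)) ∂P
        + G₂' b' * (b' - CVaR P Y α) - G₂ b' := by
    intro b'
    have hB : Integrable (fun ω => G₂' b' * (b' - (q + (1 - α)⁻¹ * max (Y ω - q) 0))) P :=
      ((integrable_const b').sub hRU).const_mul _
    have hQB : Integrable (fun ω => ((if Y ω ≤ q then 1 else 0) - α) * (G₁ q - G₁ (Y ω))
        + G₂ (Y ω) + G₂' b' * (b' - (q + (1 - α)⁻¹ * max (Y ω - q) 0))) P := hQ.add hB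
    simp_rw [varCVaRScore_eq_max hα.ne]
    rw [integral_sub hQB (integrable_const _), integral_add hQ hB, integral_const_mul,
      integral_sub (integrable_const _) hRU, integral_add (integrable_const _) (hmax.const_mul _),
      integral_const_mul, hq.CVaR_eq hY hYint hα]
    simp
  rw [hexpect, hexpect]
  ring

end Score

theorem var_cvar_score_strictly_consistent_general {Ω : Type*} [MeasurableSpace Ω] (P : Measure Ω)
    [IsProbabilityMeasure P] (α : ℝ) (hα : α ∈ Set.Ioo (0:ℝ) 1)
    (Y : Ω → ℝ) (hYm : Measurable Y) (hY : Integrable Y P)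
    (huniq : ∃! q : ℝ, IsQuantile P Y α q)
    (G₁ G₂ G₂' : ℝ → ℝ)
    -- G₂ is strictly convex with subgradient G₂'
    (hG₂strict : ∀ x y : ℝ, y ≠ x → G₂ x + G₂' x * (y - x) < G₂ y)
    -- for every 𝔞₂, the map x ↦ G₁(x) − (x/(1−α)) G₂'(𝔞₂) is strictly increasing
    (hG₁ : ∀ a₂ : ℝ, StrictMono (fun x => G₁ x - x / (1 - α) * G₂' a₂))
    (hG₁Y : Integrable (fun ω => G₁ (Y ω)) P)
    (hG₂Y : Integrable (fun ω => G₂ (Y ω)) P)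
    (S : ℝ → ℝ → ℝ → ℝ)
    (hS : ∀ a₁ a₂ y : ℝ, S a₁ a₂ y =
      ((if y ≤ a₁ then (1:ℝ) else 0) - α) * (G₁ a₁ - G₁ y) - G₂ a₂ + G₂ y
        + G₂' a₂ * (a₂ + (1 - α)⁻¹ *
            (((if a₁ < y then (1:ℝ) else 0) - (1 - α)) * a₁
              - (if a₁ < y then (1:ℝ) else 0) * y))) :
    ∀ a₁ a₂ : ℝ, a₁ ≤ a₂ → (a₁, a₂) ≠ (VaR P Y α, CVaR P Y α) →
      ∫ ω, S (VaR P Y α) (CVaR P Y α) (Y ω) ∂P < ∫ ω, S a₁ a₂ (Y ω) ∂P := by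
  intro a₁ a₂ _ hne
  obtain ⟨q, hq, hq_unique⟩ := huniq
  rw [hq_unique _ (isQuantile_VaR hYm hα)] at hne ⊢
  obtain rfl : S = varCVaRScore α G₁ G₂ G₂' := funext₃ hS
  have hHY : Integrable (fun ω => G₁ (Y ω) - Y ω / (1 - α) * G₂' a₂) P :=
    hG₁Y.sub ((hY.div_const _).mul_const _)
  have hfirst := integral_varCVaRScore_sub (G₂' := G₂') hYm hα.2.ne hY hG₁Y hG₂Y a₁ q a₂
  have hsecond := hq.integral_varCVaRScore_sub_CVaR (G₂' := G₂') hYm hα.2 hY hG₁Y hG₂Y a₂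
  rcases eq_or_ne a₂ (CVaR P Y α) with rfl | ha₂
  · have ha₁ : ¬IsQuantile P Y α a₁ := fun h => hne (by rw [hq_unique a₁ h])
    have := hq.expectedQuantileScore_lt hYm (hG₁ _) hHY ha₁
    linarith
  · have := hq.expectedQuantileScore_le hYm (hG₁ a₂).monotone hHY a₁
    linarith [hG₂strict a₂ _ ha₂.symm]

/-- The Fissler–Ziegel scoring function is strictly consistent for the pair
`(VaR_α, CVaR_α)`. -/
theorem var_cvar_score_strictly_consistent {Ω : Type*} [MeasurableSpace Ω] (P : Measure Ω)
    [IsProbabilityMeasure P] (α : ℝ) (hα : α ∈ Set.Ioo (0:ℝ) 1)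
    (Y : Ω → ℝ) (hYm : Measurable Y) (hY : Integrable Y P)
    (huniq : ∃! q : ℝ, IsQuantile P Y α q)
    (G₁ G₂ G₂' : ℝ → ℝ)
    -- G₂ is strictly convex with subgradient G₂'
    (hG₂ : ∀ x y : ℝ, G₂ x + G₂' x * (y - x) ≤ G₂ y)
    (hG₂strict : ∀ x y : ℝ, y ≠ x → G₂ x + G₂' x * (y - x) < G₂ y)
    -- for every 𝔞₂, the map x ↦ G₁(x) − (x/(1−α)) G₂'(𝔞₂) is strictly increasing
    (hG₁ : ∀ a₂ : ℝ, StrictMono (fun x => G₁ x - x / (1 - α) * G₂' a₂))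
    (hG₁Y : Integrable (fun ω => G₁ (Y ω)) P)
    (hG₂Y : Integrable (fun ω => G₂ (Y ω)) P)
    (S : ℝ → ℝ → ℝ → ℝ)
    (hS : ∀ a₁ a₂ y : ℝ, S a₁ a₂ y =
      ((if y ≤ a₁ then (1:ℝ) else 0) - α) * (G₁ a₁ - G₁ y) - G₂ a₂ + G₂ y
        + G₂' a₂ * (a₂ + (1 - α)⁻¹ *
            (((if a₁ < y then (1:ℝ) else 0) - (1 - α)) * a₁
              - (if a₁ < y then (1:ℝ) else 0) * y))) :
    ∀ a₁ a₂ : ℝ, a₁ ≤ a₂ → (a₁, a₂) ≠ (VaR P Y α, CVaR P Y α) →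
      ∫ ω, S (VaR P Y α) (CVaR P Y α) (Y ω) ∂P < ∫ ω, S a₁ a₂ (Y ω) ∂P :=
  var_cvar_score_strictly_consistent_general P α hα Y hYm hY huniq G₁ G₂ G₂' hG₂strict hG₁ hG₁Y hG₂Y
    S hS
end
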